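/- arXiv:2307.10581 — 5 statements merged into one kernel-verified Lean document; each statement's English description precedes it below -/
import Mathlib

section
/- Let C ⊆ (Z/kZ)^{2n} be an additive code. The Construction A lattice Λ(C) is even and self-dual with respect to the off-diagonal Lorentzian form η if and only if C is even and self-dual with respect to η. -/
open scoped BigOperators

/-- Real off-diagonal Lorentzian form `η(x,y) = Σ (x_i y_{n+i} + y_i x_{n+i})`. -/
noncomputable def etaR {n : ℕ} (x y : (Fin n → ℝ) × (Fin n → ℝ)) : ℝ :=
  ∑ i, (x.1 i * y.2 i + y.1 i * x.2 i)

/-- Construction A lattice of a code `C ⊆ (Z/kZ)^{2n}`, scaled by `1/√k`. -/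
noncomputable def constructionA {n : ℕ} (k : ℕ)
    (C : Set ((Fin n → ZMod k) × (Fin n → ZMod k))) :
    Set ((Fin n → ℝ) × (Fin n → ℝ)) :=
  { x | ∃ u ∈ C, ∃ m₁ m₂ : Fin n → ℤ,
      (∀ i, x.1 i = (((u.1 i).val : ℝ) + k * m₁ i) / Real.sqrt k) ∧
      (∀ i, x.2 i = (((u.2 i).val : ℝ) + k * m₂ i) / Real.sqrt k) }

/-- Dual lattice with respect to `etaR`. -/
noncomputable def dualLattice {n : ℕ} (Λ : Set ((Fin n → ℝ) × (Fin n → ℝ))) :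
    Set ((Fin n → ℝ) × (Fin n → ℝ)) :=
  { y | ∀ x ∈ Λ, ∃ z : ℤ, etaR x y = z }

/-- Lorentzian form in `Z/kZ`. -/
def etaMod {n k : ℕ} (u v : (Fin n → ZMod k) × (Fin n → ZMod k)) : ZMod k :=
  ∑ i, (u.1 i * v.2 i + v.1 i * u.2 i)

/-- Dual code with respect to the Lorentzian form mod `k`. -/
def dualCode {n k : ℕ} (C : Set ((Fin n → ZMod k) × (Fin n → ZMod k))) :
    Set ((Fin n → ZMod k) × (Fin n → ZMod k)) :=
  { v | ∀ u ∈ C, etaMod u v = 0 }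

/-- Integer-lift Lorentzian norm of a codeword. -/
def etaInt {n k : ℕ} (u v : (Fin n → ZMod k) × (Fin n → ZMod k)) : ℤ :=
  ∑ i, (((u.1 i).val : ℤ) * ((v.2 i).val : ℤ) + ((v.1 i).val : ℤ) * ((u.2 i).val : ℤ))

/-! Write `L ⊆ ℤ^{2n}` for the preimage of `C` under reduction mod `k`; then `Λ(C)` is the image of
`L` under `a ↦ a / √k`, and `η(a / √k, b / √k) = η(a, b) / k`. So a pairing in `Λ(C)` is integral
iff the reductions of `a` and `b` are `η`-orthogonal mod `k`, and a norm is even iff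
`∑ aᵢ a_{n+i} ≡ 0 mod k`, a condition on the reduction alone. Since `L ⊇ k ℤ^{2n}`, pairing with the
vectors `k eᵢ / √k` shows that every vector of the dual lattice is itself of the form `b / √k` with
`b` integral. Hence `Λ(C)* = Λ(C^⊥)`, and `C ↦ Λ(C)` is injective. -/

open Finset Function

section EtaForm

variable {R : Type*} {n : ℕ}

def etaForm [CommSemiring R] (x y : (Fin n → R) × (Fin n → R)) : R :=
  ∑ i, (x.1 i * y.2 i + y.1 i * x.2 i)

def crossSum [CommSemiring R] (x : (Fin n → R) × (Fin n → R)) : R :=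
  ∑ i, x.1 i * x.2 i

theorem etaForm_self [CommSemiring R] (x : (Fin n → R) × (Fin n → R)) :
    etaForm x x = 2 * crossSum x := by
  simp only [etaForm, crossSum, mul_sum]
  exact sum_congr rfl fun i _ => by ring

theorem etaForm_single_zero [CommSemiring R] (i : Fin n) (c : R)
    (y : (Fin n → R) × (Fin n → R)) : etaForm (Pi.single i c, 0) y = c * y.2 i := by
  simp [etaForm, Pi.single_apply]

theorem etaForm_zero_single [CommSemiring R] (i : Fin n) (c : R)
    (y : (Fin n → R) × (Fin n → R)) : etaForm (0, Pi.single i c) y = y.1 i * c := by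
  simp [etaForm, Pi.single_apply]

def intCastPair (R : Type*) [IntCast R] (a : (Fin n → ℤ) × (Fin n → ℤ)) :
    (Fin n → R) × (Fin n → R) :=
  (fun i => a.1 i, fun i => a.2 i)

theorem intCast_etaForm [CommRing R] (a b : (Fin n → ℤ) × (Fin n → ℤ)) :
    ((etaForm a b : ℤ) : R) = etaForm (intCastPair R a) (intCastPair R b) := by
  simp [etaForm, intCastPair]

theorem intCast_crossSum [CommRing R] (a : (Fin n → ℤ) × (Fin n → ℤ)) :
    ((crossSum a : ℤ) : R) = crossSum (intCastPair R a) := by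
  simp [crossSum, intCastPair]

end EtaForm

theorem exists_intCast_div_eq_mul_iff {d : ℤ} (hd : d ≠ 0) (m A : ℤ) :
    (∃ z : ℤ, (A : ℝ) / d = m * z) ↔ m * d ∣ A := by
  have hd' : (d : ℝ) ≠ 0 := by exact_mod_cast hd
  constructor
  · rintro ⟨z, hz⟩
    refine ⟨z, ?_⟩
    rw [div_eq_iff hd'] at hz
    exact_mod_cast (by rw [hz]; ring : (A : ℝ) = m * d * z)
  · rintro ⟨z, rfl⟩
    exact ⟨z, by push_cast; field_simp⟩

section ConstructionA

variable {n k : ℕ}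

theorem etaR_eq_etaForm (x y : (Fin n → ℝ) × (Fin n → ℝ)) : etaR x y = etaForm x y := rfl

theorem etaMod_eq_etaForm (u v : (Fin n → ZMod k) × (Fin n → ZMod k)) :
    etaMod u v = etaForm u v := rfl

def valPair (u : (Fin n → ZMod k) × (Fin n → ZMod k)) : (Fin n → ℤ) × (Fin n → ℤ) :=
  (fun i => (u.1 i).val, fun i => (u.2 i).val)

theorem etaInt_eq_etaForm (u v : (Fin n → ZMod k) × (Fin n → ZMod k)) :
    etaInt u v = etaForm (valPair u) (valPair v) := rfl

theorem intCastPair_valPair [NeZero k] (u : (Fin n → ZMod k) × (Fin n → ZMod k)) :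
    intCastPair (ZMod k) (valPair u) = u := by
  simp [intCastPair, valPair]

theorem intCastPair_zmod_surjective [NeZero k] :
    Surjective (intCastPair (n := n) (ZMod k)) :=
  fun u => ⟨valPair u, intCastPair_valPair u⟩

noncomputable def scaledCast (k : ℕ) (a : (Fin n → ℤ) × (Fin n → ℤ)) :
    (Fin n → ℝ) × (Fin n → ℝ) :=
  (fun i => a.1 i / √k, fun i => a.2 i / √k)

theorem scaledCast_injective [NeZero k] : Injective (scaledCast (n := n) k) := by
  have hk : √(k : ℝ) ≠ 0 := Real.sqrt_ne_zero'.mpr (Nat.cast_pos.mpr (NeZero.pos k))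
  intro a b hab
  simp only [scaledCast, Prod.mk.injEq, funext_iff, div_left_inj' hk, Int.cast_inj] at hab
  exact Prod.ext (funext hab.1) (funext hab.2)

theorem etaR_scaledCast (a b : (Fin n → ℤ) × (Fin n → ℤ)) :
    etaR (scaledCast k a) (scaledCast k b) = etaForm a b / k := by
  have hk : √(k : ℝ) * √k = k := Real.mul_self_sqrt k.cast_nonneg
  simp only [etaR, etaForm, scaledCast, div_mul_div_comm, hk, ← add_div]
  push_cast
  rw [sum_div]

theorem val_intCast_add_mul_ediv [NeZero k] (z : ℤ) :
    ((z : ZMod k).val : ℤ) + k * (z / k) = z := by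
  rw [ZMod.val_intCast, Int.emod_add_mul_ediv]

theorem constructionA_eq_image [NeZero k] (S : Set ((Fin n → ZMod k) × (Fin n → ZMod k))) :
    constructionA k S = scaledCast k '' (intCastPair (ZMod k) ⁻¹' S) := by
  ext x
  constructor
  · rintro ⟨u, hu, m₁, m₂, hx₁, hx₂⟩
    refine ⟨(fun i => (u.1 i).val + k * m₁ i, fun i => (u.2 i).val + k * m₂ i), ?_, ?_⟩
    · convert hu
      simp [intCastPair]
    · ext i <;> simp [scaledCast, hx₁, hx₂]
  · rintro ⟨a, ha, rfl⟩
    refine ⟨_, ha, fun i => a.1 i / k, fun i => a.2 i / k, fun i => ?_, fun i => ?_⟩ <;>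
    · simp only [scaledCast, intCastPair]
      congr 1
      exact_mod_cast (val_intCast_add_mul_ediv _).symm

theorem constructionA_injective [NeZero k] : Injective (constructionA (n := n) k) := by
  intro S T h
  simp only [constructionA_eq_image] at h
  exact (Set.preimage_injective.mpr intCastPair_zmod_surjective)
    (Set.image_injective.mpr scaledCast_injective h)

theorem exists_etaR_scaledCast_eq_intCast_iff [NeZero k] (a b : (Fin n → ℤ) × (Fin n → ℤ)) :
    (∃ z : ℤ, etaR (scaledCast k a) (scaledCast k b) = z) ↔
      etaMod (intCastPair (ZMod k) a) (intCastPair (ZMod k) b) = 0 := by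
  rw [etaR_scaledCast, etaMod_eq_etaForm, ← intCast_etaForm, ZMod.intCast_zmod_eq_zero_iff_dvd]
  simpa using exists_intCast_div_eq_mul_iff (Nat.cast_ne_zero.mpr (NeZero.ne k)) 1 (etaForm a b)

theorem exists_etaR_scaledCast_self_eq_two_mul_iff [NeZero k] (a : (Fin n → ℤ) × (Fin n → ℤ)) :
    (∃ z : ℤ, etaR (scaledCast k a) (scaledCast k a) = 2 * z) ↔
      crossSum (intCastPair (ZMod k) a) = 0 := by
  rw [etaR_scaledCast, ← intCast_crossSum, ZMod.intCast_zmod_eq_zero_iff_dvd,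
    ← mul_dvd_mul_iff_left (two_ne_zero' ℤ), ← etaForm_self]
  simpa using exists_intCast_div_eq_mul_iff (Nat.cast_ne_zero.mpr (NeZero.ne k)) 2 (etaForm a a)

theorem two_mul_dvd_etaInt_self_iff [NeZero k] (u : (Fin n → ZMod k) × (Fin n → ZMod k)) :
    2 * (k : ℤ) ∣ etaInt u u ↔ crossSum u = 0 := by
  rw [etaInt_eq_etaForm, etaForm_self, mul_dvd_mul_iff_left (two_ne_zero' ℤ),
    ← ZMod.intCast_zmod_eq_zero_iff_dvd, intCast_crossSum, intCastPair_valPair]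

theorem constructionA_even_iff [NeZero k] (S : Set ((Fin n → ZMod k) × (Fin n → ZMod k))) :
    (∀ x ∈ constructionA k S, ∃ z : ℤ, etaR x x = 2 * z) ↔
      ∀ u ∈ S, 2 * (k : ℤ) ∣ etaInt u u := by
  simp only [constructionA_eq_image, Set.forall_mem_image, Set.mem_preimage,
    exists_etaR_scaledCast_self_eq_two_mul_iff, two_mul_dvd_etaInt_self_iff]
  exact (intCastPair_zmod_surjective.forall (p := fun u => u ∈ S → crossSum u = 0)).symm

theorem scaledCast_mem_dualLattice_iff [NeZero k] (S : Set ((Fin n → ZMod k) × (Fin n → ZMod k)))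
    (b : (Fin n → ℤ) × (Fin n → ℤ)) :
    scaledCast k b ∈ dualLattice (constructionA k S) ↔ intCastPair (ZMod k) b ∈ dualCode S := by
  simp only [dualLattice, dualCode, Set.mem_ofPred_eq, constructionA_eq_image,
    Set.forall_mem_image, Set.mem_preimage, exists_etaR_scaledCast_eq_intCast_iff]
  exact (intCastPair_zmod_surjective.forall
    (p := fun u => u ∈ S → etaMod u (intCastPair (ZMod k) b) = 0)).symm

theorem intCastPair_single_zero (i : Fin n) :
    intCastPair (ZMod k) (Pi.single i (k : ℤ), 0) = 0 := by
  ext j <;> by_cases h : j = i <;> simp [intCastPair, h]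

theorem intCastPair_zero_single (i : Fin n) :
    intCastPair (ZMod k) (0, Pi.single i (k : ℤ)) = 0 := by
  ext j <;> by_cases h : j = i <;> simp [intCastPair, h]

theorem scaledCast_single_zero (i : Fin n) :
    scaledCast k (Pi.single i (k : ℤ), 0) = (Pi.single i √k, 0) := by
  ext j <;> by_cases h : j = i <;> simp [scaledCast, h]

theorem scaledCast_zero_single (i : Fin n) :
    scaledCast k (0, Pi.single i (k : ℤ)) = (0, Pi.single i √k) := by
  ext j <;> by_cases h : j = i <;> simp [scaledCast, h]

theorem exists_scaledCast_eq_of_mem_dualLattice [NeZero k]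
    {S : Set ((Fin n → ZMod k) × (Fin n → ZMod k))} (hS : 0 ∈ S)
    {y : (Fin n → ℝ) × (Fin n → ℝ)} (hy : y ∈ dualLattice (constructionA k S)) :
    ∃ b, scaledCast k b = y := by
  have hk : √(k : ℝ) ≠ 0 := Real.sqrt_ne_zero'.mpr (Nat.cast_pos.mpr (NeZero.pos k))
  have mem : ∀ a, intCastPair (ZMod k) a = 0 → scaledCast k a ∈ constructionA k S :=
    fun a ha => (constructionA_eq_image S).symm ▸ ⟨a, by simpa [ha] using hS, rfl⟩
  have h₁ : ∀ i, ∃ z : ℤ, y.1 i * √k = z := fun i => by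
    simpa [scaledCast_zero_single, etaR_eq_etaForm, etaForm_zero_single] using
      hy _ (mem _ (intCastPair_zero_single i))
  have h₂ : ∀ i, ∃ z : ℤ, √k * y.2 i = z := fun i => by
    simpa [scaledCast_single_zero, etaR_eq_etaForm, etaForm_single_zero] using
      hy _ (mem _ (intCastPair_single_zero i))
  choose b₁ hb₁ using h₁
  choose b₂ hb₂ using h₂
  refine ⟨(b₁, b₂), ?_⟩
  ext i
  · simp [scaledCast, ← hb₁, hk]
  · simp [scaledCast, ← hb₂, hk]

theorem dualLattice_constructionA [NeZero k] {S : Set ((Fin n → ZMod k) × (Fin n → ZMod k))}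
    (hS : 0 ∈ S) : dualLattice (constructionA k S) = constructionA k (dualCode S) := by
  ext y
  rw [constructionA_eq_image (dualCode S)]
  constructor
  · intro hy
    obtain ⟨b, rfl⟩ := exists_scaledCast_eq_of_mem_dualLattice hS hy
    exact ⟨b, (scaledCast_mem_dualLattice_iff S b).mp hy, rfl⟩
  · rintro ⟨b, hb, rfl⟩
    exact (scaledCast_mem_dualLattice_iff S b).mpr hb

end ConstructionA

theorem constructionA_even_self_dual_iff (n k : ℕ) (hk : 0 < k)
    (C : AddSubgroup ((Fin n → ZMod k) × (Fin n → ZMod k))) :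
    ((∀ lam ∈ constructionA (n := n) k (C : Set _), ∃ z : ℤ, etaR lam lam = 2 * z) ∧
      constructionA (n := n) k (C : Set _) = dualLattice (constructionA (n := n) k (C : Set _))) ↔
      ((∀ u ∈ C, (2 * (k : ℤ)) ∣ etaInt u u) ∧
        (C : Set _) = dualCode (n := n) (k := k) (C : Set _)) := by
  have : NeZero k := ⟨hk.ne'⟩
  rw [constructionA_even_iff, dualLattice_constructionA C.zero_mem, constructionA_injective.eq_iff]
  rfl
end

section
/- Let C ⊆ (Z/kZ)^n be a linear code and 𝒞 = C × C^⊥ its CSS code. Then the Construction A lattice Λ(𝒞) ⊆ R^{2n} is even and self-dual with respect to the off-diagonal Lorentzian form η. -/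
open scoped BigOperators

/-- Euclidean dual of a linear code over `Z/kZ`. -/
def euclDual {n k : ℕ} (C : Set (Fin n → ZMod k)) : Set (Fin n → ZMod k) :=
  { b | ∀ a ∈ C, ∑ i, a i * b i = 0 }

/-!
A point of `constructionA k 𝒞` is `(c, d) / √k` for integer vectors `c, d` whose reductions
mod `k` form a codeword of `𝒞`, and `η((c, d) / √k, (c', d') / √k) = (c ⬝ d' + c' ⬝ d) / k`.
For `𝒞 = C × C^⊥` both dot products are divisible by `k`, which gives evenness and `Λ ⊆ Λ*`.
Conversely, pairing `y ∈ Λ*` with `(k eⱼ, 0) / √k` and `(0, k eⱼ) / √k` shows that `√k y` is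
integral, and pairing it with lifts of `(a, 0)`, `a ∈ C`, and `(0, b)`, `b ∈ C^⊥`, puts its
reduction in `C^⊥⊥ × C^⊥`. Finally `C^⊥⊥ = C` because `ZMod k` is self-injective: its ideals are
principal, and Baer's criterion reduces to "if every `r` killing `a` kills `b`, then `a ∣ b`".
-/

namespace ZMod

instance instIsPrincipalIdealRing (k : ℕ) : IsPrincipalIdealRing (ZMod k) :=
  IsPrincipalIdealRing.of_surjective (Int.castRingHom (ZMod k)) intCast_surjective

variable {k : ℕ} [NeZero k]

-- With `g = gcd(a, k)`: `(k / g) * a = 0` forces `g ∣ b`, and `a ∣ g` since `a * a⁻¹ = g`.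
theorem dvd_of_forall_mul_eq_zero {a b : ZMod k} (h : ∀ r : ZMod k, r * a = 0 → r * b = 0) :
    a ∣ b := by
  obtain ⟨g, hg⟩ : ∃ g, a.val.gcd k = g := ⟨_, rfl⟩
  have hkg : k / g * g = k := Nat.div_mul_cancel (hg ▸ Nat.gcd_dvd_right _ _)
  have hkg_pos : 0 < k / g :=
    Nat.pos_of_ne_zero fun h0 => NeZero.ne k (by rw [← hkg, h0, zero_mul])
  have hr : ((k / g : ℕ) : ZMod k) * b = 0 := h _ <| by
    rw [← natCast_zmod_val a, ← Nat.cast_mul, natCast_eq_zero_iff]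
    have := Nat.mul_dvd_mul_left (k / g) (hg ▸ Nat.gcd_dvd_left a.val k)
    rwa [hkg] at this
  rw [← natCast_zmod_val b, ← Nat.cast_mul, natCast_eq_zero_iff] at hr
  have hgb : k / g * g ∣ k / g * b.val := by rwa [hkg]
  obtain ⟨t, ht⟩ := Nat.dvd_of_mul_dvd_mul_left hkg_pos hgb
  calc a ∣ (g : ZMod k) := ⟨a⁻¹, hg ▸ (mul_inv_eq_gcd a).symm⟩
    _ ∣ b := ⟨t, by rw [← natCast_zmod_val b, ht, Nat.cast_mul]⟩

theorem exists_ne_zero_mul_eq_zero {a : ZMod k} (ha : ¬IsUnit a) :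
    ∃ e : ZMod k, e ≠ 0 ∧ a * e = 0 := by
  by_contra! h
  exact ha (isUnit_of_dvd_one (dvd_of_forall_mul_eq_zero fun r hr => by
    rw [mul_one]; by_contra hr0; exact h r hr0 (by rw [mul_comm, hr])))

theorem baer_self : Module.Baer (ZMod k) (ZMod k) := by
  intro I g
  obtain ⟨a, rfl⟩ := (IsPrincipalIdealRing.principal I).principal
  have ha : a ∈ Ideal.span {a} := Ideal.mem_span_singleton_self a
  have hg (r : ZMod k) : r * g ⟨a, ha⟩ = g ⟨r * a, Ideal.mul_mem_left _ r ha⟩ := by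
    rw [← smul_eq_mul, ← map_smul]; rfl
  obtain ⟨y, hy⟩ : a ∣ g ⟨a, ha⟩ := dvd_of_forall_mul_eq_zero fun r hr => by
    simp only [hg, hr]; exact map_zero g
  refine ⟨LinearMap.mulRight (ZMod k) y, fun x hx => ?_⟩
  obtain ⟨r, rfl⟩ := Ideal.mem_span_singleton'.mp hx
  rw [LinearMap.mulRight_apply, mul_assoc, ← hy, hg]

-- `ZMod k ⧸ ann q ≅ span q`: send `1` to some `e ≠ 0` killed by `ann q = (a)`, then extend to `Q`.
theorem exists_linearMap_apply_ne_zero {Q : Type*} [AddCommGroup Q] [Module (ZMod k) Q] {q : Q}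
    (hq : q ≠ 0) : ∃ φ : Q →ₗ[ZMod k] ZMod k, φ q ≠ 0 := by
  let f := LinearMap.toSpanSingleton (ZMod k) Q q
  obtain ⟨a, ha⟩ := (IsPrincipalIdealRing.principal (LinearMap.ker f)).principal
  have haq : a • q = 0 := (ha ▸ Submodule.mem_span_singleton_self a : a ∈ LinearMap.ker f)
  obtain ⟨e, he, hae⟩ := exists_ne_zero_mul_eq_zero fun hu => hq (hu.smul_eq_zero.mp haq)
  let ψ := LinearMap.toSpanSingleton (ZMod k) (ZMod k) e
  have hker : LinearMap.ker f ≤ LinearMap.ker ψ := by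
    rw [ha, Submodule.span_singleton_le_iff_mem]
    exact hae
  obtain ⟨φ, hφ⟩ := baer_self.extension_property ((LinearMap.ker f).liftQ f le_rfl)
    (LinearMap.ker_eq_bot.mp (Submodule.ker_liftQ_eq_bot _ _ _ le_rfl))
    ((LinearMap.ker f).liftQ ψ hker)
  have hφq : φ q = e := by
    simpa only [LinearMap.comp_apply, Submodule.liftQ_apply, f, ψ, LinearMap.toSpanSingleton_apply,
      one_smul] using LinearMap.congr_fun hφ (Submodule.Quotient.mk 1)
  exact ⟨φ, hφq ▸ he⟩

end ZMod

theorem mem_of_mem_euclDual_euclDual {n k : ℕ} [NeZero k]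
    (C : Submodule (ZMod k) (Fin n → ZMod k)) {v : Fin n → ZMod k}
    (hv : v ∈ euclDual (euclDual (C : Set (Fin n → ZMod k)))) : v ∈ C := by
  by_contra hvC
  obtain ⟨φ, hφ⟩ :=
    ZMod.exists_linearMap_apply_ne_zero (k := k) ((Submodule.Quotient.mk_eq_zero C).not.mpr hvC)
  let ψ := φ ∘ₗ C.mkQ
  let b : Fin n → ZMod k := fun i => ψ fun j => if i = j then 1 else 0
  have hψ (x : Fin n → ZMod k) : ψ x = ∑ i, b i * x i := by
    simp only [LinearMap.pi_apply_eq_sum_univ ψ x, smul_eq_mul, mul_comm, b]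
  have hb : b ∈ euclDual (C : Set (Fin n → ZMod k)) := fun a ha => by
    have hψa : ψ a = 0 := by simp [ψ, (Submodule.Quotient.mk_eq_zero C).mpr ha]
    simpa only [hψ, mul_comm] using hψa
  exact hφ ((hψ v).trans (hv b hb))

def cssCode {n k : ℕ} (C : Set (Fin n → ZMod k)) :
    Set ((Fin n → ZMod k) × (Fin n → ZMod k)) :=
  C ×ˢ euclDual C

noncomputable def scaledPair (k : ℕ) {n : ℕ} (c d : Fin n → ℤ) :
    (Fin n → ℝ) × (Fin n → ℝ) :=
  (fun i => c i / √k, fun i => d i / √k)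

theorem natCast_mul_div_sqrt (k : ℕ) (t : ℝ) : k * t / √k = √k * t := by
  rw [mul_div_right_comm, Real.div_sqrt]

section ConstructionA

variable {n k : ℕ}

theorem natCast_dvd_sum_mul_iff (c d : Fin n → ℤ) :
    (k : ℤ) ∣ ∑ i, c i * d i ↔ ∑ i, (c i : ZMod k) * (d i : ZMod k) = 0 := by
  rw [← ZMod.intCast_zmod_eq_zero_iff_dvd]
  push_cast
  rfl

theorem exists_intCast_eq_div_iff [NeZero k] (m : ℤ) :
    (∃ z : ℤ, (m : ℝ) / k = z) ↔ (k : ℤ) ∣ m := by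
  have hk : (k : ℝ) ≠ 0 := Nat.cast_ne_zero.mpr (NeZero.ne k)
  refine ⟨fun ⟨z, hz⟩ => ⟨z, ?_⟩, fun ⟨z, hz⟩ => ⟨z, ?_⟩⟩
  · rw [div_eq_iff hk] at hz
    exact_mod_cast hz.trans (mul_comm _ _)
  · rw [hz, div_eq_iff hk]
    push_cast
    ring

theorem mem_constructionA_iff [NeZero k] {C : Set ((Fin n → ZMod k) × (Fin n → ZMod k))}
    {x : (Fin n → ℝ) × (Fin n → ℝ)} :
    x ∈ constructionA k C ↔
      ∃ c d : Fin n → ℤ, (Int.cast ∘ c, Int.cast ∘ d) ∈ C ∧ scaledPair k c d = x := by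
  constructor
  · rintro ⟨u, hu, m₁, m₂, h₁, h₂⟩
    refine ⟨fun i => (u.1 i).val + k * m₁ i, fun i => (u.2 i).val + k * m₂ i, ?_, ?_⟩
    · convert hu using 2 <;> ext i <;> simp
    · ext i <;> simp [scaledPair, h₁, h₂]
  · rintro ⟨c, d, hcd, rfl⟩
    have hlift (a : ℤ) : (((a : ZMod k).val : ℝ) + k * (a / k : ℤ)) = a := by
      have := Int.emod_add_mul_ediv a k
      rw [← ZMod.val_intCast] at this
      exact_mod_cast this
    exact ⟨_, hcd, fun i => c i / k, fun i => d i / k,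
      fun i => by simp only [scaledPair, Function.comp_apply, hlift],
      fun i => by simp only [scaledPair, Function.comp_apply, hlift]⟩

theorem etaR_scaledPair_left (c d : Fin n → ℤ) (y : (Fin n → ℝ) × (Fin n → ℝ)) :
    etaR (scaledPair k c d) y = (∑ i, (c i * y.2 i + y.1 i * d i)) / √k := by
  rw [etaR, Finset.sum_div]
  refine Finset.sum_congr rfl fun i _ => ?_
  simp only [scaledPair]
  ring

theorem etaR_scaledPair (c d c' d' : Fin n → ℤ) :
    etaR (scaledPair k c d) (scaledPair k c' d') =
      ((∑ i, (c i * d' i + c' i * d i) : ℤ) : ℝ) / k := by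
  have hk : √(k : ℝ) * √k = k := Real.mul_self_sqrt (Nat.cast_nonneg k)
  rw [etaR_scaledPair_left]
  simp only [scaledPair, ← mul_div_assoc, div_mul_eq_mul_div, ← add_div, ← Finset.sum_div,
    div_div, hk]
  push_cast
  rfl

theorem etaR_scaledPair_single_zero (j : Fin n) (y : (Fin n → ℝ) × (Fin n → ℝ)) :
    etaR (scaledPair k (Pi.single j k) 0) y = √k * y.2 j := by
  simp [etaR_scaledPair_left, Pi.single_apply, natCast_mul_div_sqrt]

theorem etaR_scaledPair_zero_single (j : Fin n) (y : (Fin n → ℝ) × (Fin n → ℝ)) :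
    etaR (scaledPair k 0 (Pi.single j k)) y = √k * y.1 j := by
  simp [etaR_scaledPair_left, Pi.single_apply, mul_comm (y.1 _), natCast_mul_div_sqrt]

theorem zero_mem_euclDual (C : Set (Fin n → ZMod k)) : 0 ∈ euclDual C := fun a _ => by simp

theorem natCast_dvd_sum_mul_of_mem_euclDual {C : Set (Fin n → ZMod k)} {c d : Fin n → ℤ}
    (hc : Int.cast ∘ c ∈ C) (hd : Int.cast ∘ d ∈ euclDual C) :
    (k : ℤ) ∣ ∑ i, c i * d i :=
  (natCast_dvd_sum_mul_iff c d).mpr (hd _ hc)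

theorem exists_etaR_self_eq_two_mul [NeZero k] {C : Set (Fin n → ZMod k)}
    {x : (Fin n → ℝ) × (Fin n → ℝ)} (hx : x ∈ constructionA k (cssCode C)) :
    ∃ z : ℤ, etaR x x = 2 * z := by
  obtain ⟨c, d, ⟨hc, hd⟩, rfl⟩ := mem_constructionA_iff.mp hx
  obtain ⟨z, hz⟩ :=
    (exists_intCast_eq_div_iff _).mpr (natCast_dvd_sum_mul_of_mem_euclDual hc hd)
  refine ⟨z, ?_⟩
  rw [etaR_scaledPair, ← hz, Finset.sum_add_distrib]
  push_cast
  ring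

theorem constructionA_cssCode_subset_dualLattice [NeZero k] (C : Set (Fin n → ZMod k)) :
    constructionA k (cssCode C) ⊆ dualLattice (constructionA k (cssCode C)) := by
  intro y hy x hx
  obtain ⟨c, d, ⟨hc, hd⟩, rfl⟩ := mem_constructionA_iff.mp hx
  obtain ⟨c', d', ⟨hc', hd'⟩, rfl⟩ := mem_constructionA_iff.mp hy
  rw [etaR_scaledPair, exists_intCast_eq_div_iff, Finset.sum_add_distrib]
  exact dvd_add (natCast_dvd_sum_mul_of_mem_euclDual hc hd')
    (natCast_dvd_sum_mul_of_mem_euclDual hc' hd)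

theorem exists_scaledPair_eq_of_mem_dualLattice [NeZero k]
    {C : Set ((Fin n → ZMod k) × (Fin n → ZMod k))} {y : (Fin n → ℝ) × (Fin n → ℝ)}
    (hy : y ∈ dualLattice (constructionA k C)) (hC : (0, 0) ∈ C) :
    ∃ c d : Fin n → ℤ, scaledPair k c d = y := by
  have hk : √(k : ℝ) ≠ 0 := (Real.sqrt_pos.mpr (Nat.cast_pos.mpr (NeZero.pos k))).ne'
  have hkj (j : Fin n) : (Int.cast ∘ Pi.single j (k : ℤ) : Fin n → ZMod k) = 0 := by
    ext i
    by_cases hij : i = j <;> simp [hij]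
  have h₁ (j : Fin n) : ∃ z : ℤ, y.1 j = z / √k := by
    obtain ⟨z, hz⟩ :=
      hy _ (mem_constructionA_iff.mpr ⟨0, Pi.single j k, by simpa [hkj] using hC, rfl⟩)
    refine ⟨z, ?_⟩
    rw [etaR_scaledPair_zero_single] at hz
    exact eq_div_of_mul_eq hk ((mul_comm _ _).trans hz)
  have h₂ (j : Fin n) : ∃ z : ℤ, y.2 j = z / √k := by
    obtain ⟨z, hz⟩ :=
      hy _ (mem_constructionA_iff.mpr ⟨Pi.single j k, 0, by simpa [hkj] using hC, rfl⟩)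
    refine ⟨z, ?_⟩
    rw [etaR_scaledPair_single_zero] at hz
    exact eq_div_of_mul_eq hk ((mul_comm _ _).trans hz)
  choose c hc using h₁
  choose d hd using h₂
  exact ⟨c, d, Prod.ext (funext fun i => (hc i).symm) (funext fun i => (hd i).symm)⟩

theorem dvd_of_scaledPair_mem_dualLattice [NeZero k]
    {C : Set ((Fin n → ZMod k) × (Fin n → ZMod k))} {a b c d : Fin n → ℤ}
    (hy : scaledPair k c d ∈ dualLattice (constructionA k C))
    (hab : (Int.cast ∘ a, Int.cast ∘ b) ∈ C) : (k : ℤ) ∣ ∑ i, (a i * d i + c i * b i) :=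
  (exists_intCast_eq_div_iff _).mp
    (etaR_scaledPair a b c d ▸ hy _ (mem_constructionA_iff.mpr ⟨a, b, hab, rfl⟩))

theorem dualLattice_subset_constructionA_cssCode [NeZero k]
    (C : Submodule (ZMod k) (Fin n → ZMod k)) :
    dualLattice (constructionA k (cssCode (C : Set (Fin n → ZMod k)))) ⊆
      constructionA k (cssCode (C : Set (Fin n → ZMod k))) := by
  intro y hy
  obtain ⟨c, d, rfl⟩ :=
    exists_scaledPair_eq_of_mem_dualLattice hy ⟨C.zero_mem, zero_mem_euclDual _⟩
  refine mem_constructionA_iff.mpr ⟨c, d, ⟨?_, ?_⟩, rfl⟩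
  · refine mem_of_mem_euclDual_euclDual C fun b hb => ?_
    obtain ⟨b, rfl⟩ := ZMod.intCast_surjective.comp_left b
    have := dvd_of_scaledPair_mem_dualLattice (a := 0) hy (Set.mk_mem_prod (by simp) hb)
    simpa [natCast_dvd_sum_mul_iff, mul_comm] using this
  · intro a ha
    obtain ⟨a, rfl⟩ := ZMod.intCast_surjective.comp_left a
    have := dvd_of_scaledPair_mem_dualLattice (b := 0) hy
      (Set.mk_mem_prod ha (by simpa using zero_mem_euclDual _))
    simpa [natCast_dvd_sum_mul_iff] using this

end ConstructionA

theorem css_constructionA_even_self_dual (n k : ℕ) (hk : 0 < k)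
    (C : Submodule (ZMod k) (Fin n → ZMod k)) :
    (∀ lam ∈ constructionA (n := n) k
        ((C : Set _) ×ˢ euclDual (n := n) (k := k) (C : Set _)),
      ∃ z : ℤ, etaR lam lam = 2 * z) ∧
    constructionA (n := n) k ((C : Set _) ×ˢ euclDual (n := n) (k := k) (C : Set _)) =
      dualLattice (constructionA (n := n) k
        ((C : Set _) ×ˢ euclDual (n := n) (k := k) (C : Set _))) := by
  have : NeZero k := ⟨hk.ne'⟩
  exact ⟨fun _ => exists_etaR_self_eq_two_mul,
    (constructionA_cssCode_subset_dualLattice _).antisymm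
      (dualLattice_subset_constructionA_cssCode C)⟩
end

section
/- Let p be an odd prime and C ⊆ F_{p^m}^N an additive code with Construction A lattice Λ(C) and symmetric unimodular integer Gram matrix g with entries w_{i,t,j,s} reducing mod p to the Gram matrix of a symmetric F_p-bilinear form β. Then Λ(C) is even with respect to b(λ,λ') = λ g λ'^T if and only if β(c,c) = 0 for all c ∈ C and all diagonal entries w_{i,t,i,t} of g are even. -/
open scoped BigOperators

noncomputable section

/-- Construction A lattice of an additive code over `F_{p^m}`: expand codeword coordinates
in the basis `e`, lift the `F_p`-coefficients to integers, and scale by `1/√p`. -/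
def latticeF (p m N : ℕ) [Fact p.Prime]
    (e : Module.Basis (Fin m) (ZMod p) (GaloisField p m))
    (C : Set (Fin N → GaloisField p m)) : Set (Fin N × Fin m → ℝ) :=
  { lam | ∃ c ∈ C, ∃ l : Fin N × Fin m → ℤ, ∀ x : Fin N × Fin m,
      lam x = (((e.repr (c x.1) x.2).val : ℝ) + p * l x) / Real.sqrt p }

/-- Bilinear form on `ℝ^{Nm}` given by an integer Gram matrix `g`. -/
def bForm {N m : ℕ} (g : Matrix (Fin N × Fin m) (Fin N × Fin m) ℤ)
    (lam lam' : Fin N × Fin m → ℝ) : ℝ :=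
  ∑ x, ∑ y, lam x * (g x y : ℝ) * lam' y

/-!
A lattice vector is `(r + p l)/√p`, where `r` lifts the coordinates of a codeword `c` and `l` is
integral, so its norm is `Q(r + p l)/p` for the integer quadratic form `Q` of `g`, and evenness
means `2p ∣ Q(r + p l) = Q(r) + 2p·B(r, l) + p²·Q(l)`. Modulo `p`, `Q(r) ≡ β(c, c)`; modulo `2`,
the off-diagonal terms of `Q` pair up, so `Q(v) ≡ ∑ g_xx v_x²`. As `p` is odd, `2p ∣ Q(r + p l)`
for all `c, l` exactly when `p ∣ Q(r)` for all codewords and `Q` is even; testing `c = 0` and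
`l` a unit vector shows the latter amounts to the diagonal of `g` being even.
-/

section GramQuad

variable {X : Type*} [Fintype X]

theorem sum_sum_eq_sum_diag_of_charTwo {R : Type*} [Ring R] [CharP R 2] [DecidableEq X]
    (f : X → X → R) (hf : ∀ x y, f x y = f y x) : ∑ x, ∑ y, f x y = ∑ x, f x x := by
  have hoff : ∑ q ∈ (Finset.univ : Finset X).offDiag, f q.1 q.2 = 0 :=
    Finset.sum_involution (fun q _ => q.swap)
      (fun q _ => by rw [Prod.fst_swap, Prod.snd_swap, hf]; exact CharTwo.add_self_eq_zero _)
      (fun q hq _ h => (Finset.mem_offDiag.1 hq).2.2 (congrArg Prod.snd h))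
      (fun q hq => by simpa [eq_comm] using hq)
      (fun q _ => q.swap_swap)
  rw [← Finset.sum_product', ← Finset.diag_union_offDiag,
    Finset.sum_union (Finset.disjoint_diag_offDiag _), Finset.sum_diag, hoff, add_zero]

def gramQuad (g : Matrix X X ℤ) (v : X → ℤ) : ℤ :=
  ∑ x, ∑ y, v x * g x y * v y

theorem even_gramQuad {g : Matrix X X ℤ} (hg : g.IsSymm) (hdiag : ∀ x, Even (g x x))
    (v : X → ℤ) : Even (gramQuad g v) := by
  classical
  refine even_iff_two_dvd.2 ((ZMod.intCast_zmod_eq_zero_iff_dvd _ 2).1 ?_)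
  push_cast [gramQuad]
  rw [sum_sum_eq_sum_diag_of_charTwo _ fun x y => by rw [hg.apply]; ring]
  refine Finset.sum_eq_zero fun x _ => ?_
  rw [(ZMod.intCast_zmod_eq_zero_iff_dvd _ 2).2 (hdiag x).two_dvd, mul_zero, zero_mul]

theorem gramQuad_add_smul {g : Matrix X X ℤ} (hg : g.IsSymm) (r l : X → ℤ) (P : ℤ) :
    gramQuad g (r + P • l) =
      gramQuad g r + 2 * P * ∑ x, ∑ y, r x * g x y * l y + P ^ 2 * gramQuad g l := by
  have hswap : ∑ x, ∑ y, l x * g x y * r y = ∑ x, ∑ y, r x * g x y * l y := by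
    rw [Finset.sum_comm]
    exact Finset.sum_congr rfl fun a _ => Finset.sum_congr rfl fun b _ => by
      rw [hg.apply a b]; ring
  calc gramQuad g (r + P • l)
      = ∑ x, ∑ y, (r x * g x y * r y + P * (r x * g x y * l y) + P * (l x * g x y * r y)
          + P ^ 2 * (l x * g x y * l y)) :=
        Finset.sum_congr rfl fun x _ => Finset.sum_congr rfl fun y _ => by
          simp only [Pi.add_apply, Pi.smul_apply, smul_eq_mul]; ring
    _ = _ := by
        simp only [Finset.sum_add_distrib, ← Finset.mul_sum, hswap, gramQuad]
        ring

theorem gramQuad_single [DecidableEq X] (g : Matrix X X ℤ) (x : X) (a : ℤ) :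
    gramQuad g (Pi.single x a) = a ^ 2 * g x x := by
  simp only [gramQuad, Pi.single_apply, ite_mul, zero_mul, mul_ite, mul_zero, Finset.sum_ite_eq',
    Finset.mem_univ, ↓reduceIte]
  ring

theorem bForm_div_sqrt {N m : ℕ} (g : Matrix (Fin N × Fin m) (Fin N × Fin m) ℤ)
    (v : Fin N × Fin m → ℤ) {t : ℝ} (ht : 0 ≤ t) :
    bForm g (fun x => v x / √t) (fun x => v x / √t) = gramQuad g v / t := by
  have hsq : √t * √t = t := Real.mul_self_sqrt ht
  simp only [bForm, gramQuad, Int.cast_sum, Int.cast_mul, Finset.sum_div]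
  refine Finset.sum_congr rfl fun x _ => Finset.sum_congr rfl fun y _ => ?_
  rw [div_mul_eq_mul_div, div_mul_div_comm, hsq]

end GramQuad

theorem exists_div_eq_two_mul_iff_dvd {n : ℤ} {p : ℕ} (hp : p ≠ 0) :
    (∃ z : ℤ, (n : ℝ) / p = 2 * z) ↔ 2 * (p : ℤ) ∣ n := by
  have hpR : (p : ℝ) ≠ 0 := Nat.cast_ne_zero.2 hp
  refine ⟨fun ⟨z, hz⟩ => ⟨z, ?_⟩, fun ⟨z, hz⟩ => ⟨z, ?_⟩⟩
  · rw [div_eq_iff hpR] at hz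
    have : (n : ℝ) = ((2 * p * z : ℤ) : ℝ) := by rw [hz]; push_cast; ring
    exact_mod_cast this
  · rw [hz, div_eq_iff hpR]
    push_cast
    ring

section Lift

variable {p : ℕ} {ι κ V : Type*} [AddCommGroup V] [Module (ZMod p) V]

def liftCoeffs (e : Module.Basis κ (ZMod p) V) (c : ι → V) : ι × κ → ℤ :=
  fun x => (e.repr (c x.1) x.2).val

@[simp]
theorem liftCoeffs_zero (e : Module.Basis κ (ZMod p) V) : liftCoeffs e (0 : ι → V) = 0 := by
  ext x
  simp [liftCoeffs]

theorem intCast_gramQuad_liftCoeffs [NeZero p] [Fintype ι] [Fintype κ] [DecidableEq ι]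
    (e : Module.Basis κ (ZMod p) V) (g : Matrix (ι × κ) (ι × κ) ℤ)
    (β : (ι → V) →ₗ[ZMod p] (ι → V) →ₗ[ZMod p] ZMod p)
    (hcompat : ∀ (i j : ι) (t s : κ),
      ((g (i, t) (j, s) : ZMod p)) = β (Pi.single i (e t)) (Pi.single j (e s)))
    (c : ι → V) :
    (gramQuad g (liftCoeffs e c) : ZMod p) = β c c := by
  have hc : c = ∑ x : ι × κ, e.repr (c x.1) x.2 • Pi.single x.1 (e x.2) := by
    funext i
    simp only [Finset.sum_apply, Pi.smul_apply, Pi.single_apply, smul_ite, smul_zero,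
      Fintype.sum_prod_type]
    rw [Finset.sum_comm]
    simp only [Finset.sum_ite_eq, Finset.mem_univ, if_true]
    exact (e.sum_repr (c i)).symm
  conv_rhs => rw [hc]
  simp only [map_sum, map_smul, LinearMap.sum_apply, LinearMap.smul_apply, smul_eq_mul,
    ← hcompat, gramQuad, liftCoeffs, Int.cast_sum, Int.cast_mul, Int.cast_natCast,
    ZMod.natCast_zmod_val, Finset.mul_sum]
  rw [Finset.sum_comm]
  exact Finset.sum_congr rfl fun x _ => Finset.sum_congr rfl fun y _ => by ring

end Lift

theorem mem_latticeF_iff {p m N : ℕ} [Fact p.Prime]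
    {e : Module.Basis (Fin m) (ZMod p) (GaloisField p m)}
    {C : Set (Fin N → GaloisField p m)} {lam : Fin N × Fin m → ℝ} :
    lam ∈ latticeF p m N e C ↔
      ∃ c ∈ C, ∃ l, lam = fun x => ((liftCoeffs e c + (p : ℤ) • l) x : ℝ) / √p := by
  simp only [latticeF, Set.mem_ofPred_eq]
  refine exists_congr fun c => and_congr_right fun _ => exists_congr fun l => ?_
  rw [funext_iff]
  simp [liftCoeffs]

theorem latticeF_even_iff_forall_dvd (p m N : ℕ) [Fact p.Prime]
    (e : Module.Basis (Fin m) (ZMod p) (GaloisField p m))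
    (C : Set (Fin N → GaloisField p m)) (g : Matrix (Fin N × Fin m) (Fin N × Fin m) ℤ) :
    (∀ lam ∈ latticeF p m N e C, ∃ z : ℤ, bForm g lam lam = 2 * z) ↔
      ∀ c ∈ C, ∀ l, 2 * (p : ℤ) ∣ gramQuad g (liftCoeffs e c + (p : ℤ) • l) := by
  have hp := (Fact.out : p.Prime).ne_zero
  constructor
  · intro h c hc l
    have := h _ (mem_latticeF_iff.2 ⟨c, hc, l, rfl⟩)
    rwa [bForm_div_sqrt g _ (Nat.cast_nonneg p), exists_div_eq_two_mul_iff_dvd hp] at this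
  · intro h lam hlam
    obtain ⟨c, hc, l, rfl⟩ := mem_latticeF_iff.1 hlam
    rw [bForm_div_sqrt g _ (Nat.cast_nonneg p), exists_div_eq_two_mul_iff_dvd hp]
    exact h c hc l

theorem latticeF_even_iff_p_odd_general (p m N : ℕ) [Fact p.Prime] (hodd : Odd p)
    (e : Module.Basis (Fin m) (ZMod p) (GaloisField p m))
    (C : AddSubgroup (Fin N → GaloisField p m))
    (g : Matrix (Fin N × Fin m) (Fin N × Fin m) ℤ)
    (hg_symm : g.IsSymm)
    (β : (Fin N → GaloisField p m) →ₗ[ZMod p]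
          (Fin N → GaloisField p m) →ₗ[ZMod p] ZMod p)
    (hcompat : ∀ (i j : Fin N) (t s : Fin m),
      ((g (i, t) (j, s) : ZMod p)) = β (Pi.single i (e t)) (Pi.single j (e s))) :
    (∀ lam ∈ latticeF p m N e (C : Set _), ∃ z : ℤ, bForm g lam lam = 2 * z) ↔
      ((∀ c ∈ C, β c c = 0) ∧ ∀ x : Fin N × Fin m, Even (g x x)) := by
  have hcop : IsCoprime (2 : ℤ) p := Nat.isCoprime_iff_coprime.2 (Nat.coprime_two_left.2 hodd)
  have hβ_dvd : ∀ c, β c c = 0 ↔ (p : ℤ) ∣ gramQuad g (liftCoeffs e c) := fun c => by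
    rw [← intCast_gramQuad_liftCoeffs e g β hcompat, ZMod.intCast_zmod_eq_zero_iff_dvd]
  rw [latticeF_even_iff_forall_dvd]
  constructor
  · intro h
    refine ⟨fun c hc => ?_, fun x => ?_⟩
    · have hdvd := h c hc 0
      rw [smul_zero, add_zero] at hdvd
      exact (hβ_dvd c).2 (dvd_of_mul_left_dvd hdvd)
    · have hdvd := h 0 C.zero_mem (Pi.single x 1)
      have hp : (p : ℤ) ≠ 0 := by exact_mod_cast hodd.pos.ne'
      rw [liftCoeffs_zero, zero_add, ← Pi.single_smul, smul_eq_mul, mul_one, gramQuad_single,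
        sq, mul_assoc, mul_comm (2 : ℤ), mul_dvd_mul_iff_left hp] at hdvd
      exact even_iff_two_dvd.2 (hcop.dvd_of_dvd_mul_left hdvd)
  · rintro ⟨hβ, hdiag⟩ c hc l
    have hr : 2 * (p : ℤ) ∣ gramQuad g (liftCoeffs e c) :=
      hcop.mul_dvd (even_gramQuad hg_symm hdiag _).two_dvd ((hβ_dvd c).1 (hβ c hc))
    obtain ⟨k, hk⟩ := even_gramQuad hg_symm hdiag l
    rw [gramQuad_add_smul hg_symm, hk]
    exact dvd_add (dvd_add hr (dvd_mul_right _ _)) ⟨p * k, by ring⟩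

theorem latticeF_even_iff_p_odd (p m N : ℕ) [Fact p.Prime] (hodd : Odd p)
    (e : Module.Basis (Fin m) (ZMod p) (GaloisField p m))
    (C : AddSubgroup (Fin N → GaloisField p m))
    (g : Matrix (Fin N × Fin m) (Fin N × Fin m) ℤ)
    (hg_symm : g.IsSymm) (hg_uni : IsUnit g.det)
    (β : (Fin N → GaloisField p m) →ₗ[ZMod p]
          (Fin N → GaloisField p m) →ₗ[ZMod p] ZMod p)
    (hβ_symm : ∀ c c', β c c' = β c' c)
    (hcompat : ∀ (i j : Fin N) (t s : Fin m),
      ((g (i, t) (j, s) : ZMod p)) = β (Pi.single i (e t)) (Pi.single j (e s))) :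
    (∀ lam ∈ latticeF p m N e (C : Set _), ∃ z : ℤ, bForm g lam lam = 2 * z) ↔
      ((∀ c ∈ C, β c c = 0) ∧ ∀ x : Fin N × Fin m, Even (g x x)) :=
  latticeF_even_iff_p_odd_general p m N hodd e C g hg_symm β hcompat
end
end

section
/- Let p be a prime and for f₀ ∈ F_p define f(x; f₀) = x³ − f₀ x² − 2x + f₀ ∈ F_p[x]. Then there exists f₀ ∈ F_p such that f(x; f₀) is irreducible over F_p. -/
open Polynomial

theorem exists_irreducible_cubic (p : ℕ) [Fact p.Prime] :
    ∃ f₀ : ZMod p, Irreducible (X ^ 3 - C f₀ * X ^ 2 - 2 * X + C f₀ : (ZMod p)[X]) := by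
  -- the candidate "bad" values of f₀
  set g : ZMod p → ZMod p := fun b => (b ^ 3 - 2 * b) / (b ^ 2 - 1) with hg
  set T : Finset (ZMod p) := Finset.image g (Finset.univ.erase 1) with hT
  have hcard : T.card < Fintype.card (ZMod p) := by
    calc T.card ≤ (Finset.univ.erase (1 : ZMod p)).card := Finset.card_image_le
    _ < Finset.univ.card := Finset.card_erase_lt_of_mem (Finset.mem_univ _)
    _ = Fintype.card (ZMod p) := rfl
  obtain ⟨f₀, hf₀⟩ : ∃ f₀ : ZMod p, f₀ ∉ T := by
    by_contra h
    push_neg at h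
    have := Finset.card_le_card (fun x _ => h x : Finset.univ ⊆ T)
    rw [Finset.card_univ] at this
    omega
  refine ⟨f₀, ?_⟩
  have hdeg : (X ^ 3 - C f₀ * X ^ 2 - 2 * X + C f₀ : (ZMod p)[X]).natDegree = 3 := by
    compute_degree!
  rw [irreducible_iff_roots_eq_zero_of_degree_le_three (by omega) (by omega)]
  rw [Multiset.eq_zero_iff_forall_notMem]
  intro b hb
  have hne : (X ^ 3 - C f₀ * X ^ 2 - 2 * X + C f₀ : (ZMod p)[X]) ≠ 0 := by
    intro h; rw [h] at hdeg; simp at hdeg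
  rw [mem_roots hne, IsRoot.def] at hb
  have heval : b ^ 3 - f₀ * b ^ 2 - 2 * b + f₀ = 0 := by
    simpa using hb
  by_cases h1 : b ^ 2 = 1
  · have : b = 1 ∨ b = -1 := by
      have hbb : b * b = 1 := by rw [← sq]; exact h1
      rcases mul_self_eq_one_iff.mp hbb with h | h
      · exact Or.inl h
      · exact Or.inr h
    rcases this with rfl | rfl
    · simp only [one_pow, mul_one] at heval
      have : (-1 : ZMod p) = 0 := by linear_combination heval
      simp at this
    · norm_num at heval
      have : (1 : ZMod p) = 0 := by linear_combination heval
      simp at this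
  · apply hf₀
    rw [hT]
    refine Finset.mem_image.mpr ⟨b, ?_, ?_⟩
    · refine Finset.mem_erase.mpr ⟨?_, Finset.mem_univ _⟩
      rintro rfl; exact h1 (one_pow 2)
    · rw [hg]
      field_simp [sub_ne_zero.mpr h1]
      linear_combination heval
end

section
/- Let f(x; a) ∈ F_p[x] be a family of polynomials of degree 2 or 3 parametrized by a ∈ F_p. Suppose (I) there exists b ∈ F_p with f(b; a) ≠ 0 for all a ∈ F_p, and (II) for every b ∈ F_p there is at most one a ∈ F_p with f(b; a) = 0. Then f(x; a) is irreducible over F_p for some a ∈ F_p. -/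
open Polynomial

theorem exists_irreducible_of_family (p : ℕ) [Fact p.Prime]
    (f : ZMod p → (ZMod p)[X])
    (hdeg : ∀ a : ZMod p, (f a).natDegree = 2 ∨ (f a).natDegree = 3)
    (hI : ∃ b : ZMod p, ∀ a : ZMod p, (f a).eval b ≠ 0)
    (hII : ∀ b : ZMod p, ∀ a₁ a₂ : ZMod p,
      (f a₁).eval b = 0 → (f a₂).eval b = 0 → a₁ = a₂) :
    ∃ a : ZMod p, Irreducible (f a) := by
  by_contra h
  push_neg at h
  obtain ⟨b₀, hb₀⟩ := hI
  -- each f a has a root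
  have hroot : ∀ a : ZMod p, ∃ b, (f a).eval b = 0 := by
    intro a
    have h2 : 2 ≤ (f a).natDegree := by rcases hdeg a with h' | h' <;> omega
    have h3 : (f a).natDegree ≤ 3 := by rcases hdeg a with h' | h' <;> omega
    have := (irreducible_iff_roots_eq_zero_of_degree_le_three h2 h3).not.mp (h a)
    have hne : (f a).roots ≠ 0 := this
    obtain ⟨r, hr⟩ := Multiset.exists_mem_of_ne_zero hne
    have hf0 : f a ≠ 0 := by
      intro h0; rw [h0] at h2; simp at h2
    exact ⟨r, (mem_roots hf0).mp hr⟩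
  choose g hg using hroot
  have hginj : Function.Injective g := fun a₁ a₂ he => by
    apply hII (g a₁) a₁ a₂ (hg a₁); rw [he]; exact hg a₂
  have hgne : ∀ a, g a ≠ b₀ := fun a he => hb₀ a (he ▸ hg a)
  -- injective map into complement of {b₀}
  have : Fintype.card (ZMod p) ≤ Fintype.card {x : ZMod p // x ≠ b₀} := by
    have : Function.Injective (fun a => (⟨g a, hgne a⟩ : {x : ZMod p // x ≠ b₀})) := by
      intro a₁ a₂ he
      exact hginj (congrArg Subtype.val he)
    exact Fintype.card_le_of_injective _ this
  rw [Fintype.card_subtype_compl] at this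
  have hp1 : 1 ≤ Fintype.card (ZMod p) := Fintype.card_pos
  simp [Fintype.card_subtype_eq] at this
  have := (Fact.out : p.Prime).pos
  omega
end
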